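/- Let C ⊆ ℝⁿ and let I ⊆ {1,…,n} be nonempty with π(C) unbounded, and let D be a nonempty compact subset of the Clarke tangent cone T_C(∞_I). Then for every ε > 0 there exist constants R > 0 and λ > 0 such that for every v in the convex hull of D, every x ∈ C with ‖π(x)‖ > R, and every t ∈ [0, λ], the set C ∩ (x + t·B_ε(v)) is nonempty, where B_ε(v) is the closed ball of radius ε around v. -/

import Mathlib

open Filter Topology Metric Set Bornology
open scoped InnerProductSpace Pointwise

noncomputable section

/-- Euclidean `n`-space. -/
abbrev En (n : ℕ) : Type := EuclideanSpace ℝ (Fin n)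

/-- The Clarke tangent cone at infinity of `C ⊆ E`, where "going to infinity" is
measured by `‖p x‖ → ∞` for a projection map `p`:  `v` belongs to the cone iff for all
sequences `x k ∈ C` with `‖p (x k)‖ → ∞` and all positive sequences `t k → 0` there is a
sequence `w k → v` with `x k + t k • w k ∈ C` for all `k`. -/
def tangentConeAtInfty {E F : Type*} [NormedAddCommGroup E] [NormedSpace ℝ E] [Norm F]
    (p : E → F) (C : Set E) : Set E :=
  {v | ∀ (x : ℕ → E) (t : ℕ → ℝ), (∀ k, x k ∈ C) →
      Tendsto (fun k => ‖p (x k)‖) atTop atTop →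
      (∀ k, 0 < t k) → Tendsto t atTop (𝓝 0) →
      ∃ w : ℕ → E, Tendsto w atTop (𝓝 v) ∧ ∀ k, x k + t k • w k ∈ C}

/-- Projection of `ℝⁿ` onto the coordinates indexed by `I`. -/
def proj {n : ℕ} (I : Finset (Fin n)) (x : En n) : EuclideanSpace ℝ ↥I := WithLp.toLp 2 (fun i => x i)

/-!
A single direction `d` of the cone can be followed uniformly: by compactness of `D` (a sequential
argument), there are `R, λ > 0` such that from every `x ∈ C` with `‖π x‖ > R` and every step
`t ≤ λ` one can move by `t • u` with `u` within `ε` of `d` and stay in `C`. A convex combination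
`v = ∑ wᵢ zᵢ` of points of `D` is then followed by chaining these steps, moving by `t wᵢ uᵢ` along
each `zᵢ` in turn. Each step lowers `‖π x‖` by at most `t wᵢ (M + ε)`, where `M` bounds `D`,
so enlarging `R` by `λ (M + ε)` keeps every intermediate point far enough out.
-/

variable {E : Type*} [NormedAddCommGroup E] [NormedSpace ℝ E]

lemma norm_proj_le {n : ℕ} (I : Finset (Fin n)) (x : En n) : ‖proj I x‖ ≤ ‖x‖ := by
  rw [EuclideanSpace.norm_eq, EuclideanSpace.norm_eq]
  apply Real.sqrt_le_sqrt
  rw [show ∑ i : I, ‖proj I x i‖ ^ 2 = ∑ i ∈ I, ‖x i‖ ^ 2 from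
    Finset.sum_coe_sort I (fun i => ‖x i‖ ^ 2)]
  exact Finset.sum_le_sum_of_subset_of_nonneg (Finset.subset_univ I) fun i _ _ => by positivity

lemma lipschitzWith_one_proj {n : ℕ} (I : Finset (Fin n)) : LipschitzWith 1 (proj I) :=
  LipschitzWith.of_dist_le_mul fun x y => by
    rw [NNReal.coe_one, one_mul, dist_eq_norm, dist_eq_norm]
    exact norm_proj_le I (x - y)

section Tangency

variable {F : Type*} [Norm F]

def UniformlyTangentAtInfty (p : E → F) (C : Set E) (ε R lam : ℝ) (v : E) : Prop :=
  ∀ x ∈ C, R < ‖p x‖ → ∀ t ∈ Icc 0 lam, ∃ u ∈ closedBall v ε, x + t • u ∈ C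

lemma eventually_exists_mem_add_smul_of_mem_tangentConeAtInfty {p : E → F} {C : Set E} {v : E}
    (hv : v ∈ tangentConeAtInfty p C) {d x : ℕ → E} {t : ℕ → ℝ} (hd : Tendsto d atTop (𝓝 v))
    (hxC : ∀ k, x k ∈ C) (hx : Tendsto (fun k => ‖p (x k)‖) atTop atTop) (ht₀ : ∀ k, 0 < t k)
    (ht : Tendsto t atTop (𝓝 0)) {ε : ℝ} (hε : 0 < ε) :
    ∀ᶠ k in atTop, ∃ u ∈ closedBall (d k) ε, x k + t k • u ∈ C := by
  obtain ⟨w, hw, hwC⟩ := hv x t hxC hx ht₀ ht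
  have hdist : Tendsto (fun k => dist (w k) (d k)) atTop (𝓝 0) := by
    simpa using hw.dist hd
  filter_upwards [hdist.eventually (ge_mem_nhds hε)] with k hk
  exact ⟨w k, hk, hwC k⟩

lemma IsCompact.exists_uniformlyTangentAtInfty {p : E → F} {C D : Set E} (hD : IsCompact D)
    (hDC : D ⊆ tangentConeAtInfty p C) {ε : ℝ} (hε : 0 < ε) :
    ∃ R > 0, ∃ lam > 0, ∀ d ∈ D, UniformlyTangentAtInfty p C ε R lam d := by
  by_contra! hcon
  have hbad : ∀ k : ℕ, ∃ d ∈ D, ∃ x ∈ C, (k : ℝ) + 1 < ‖p x‖ ∧ ∃ t ∈ Icc 0 (1 / ((k : ℝ) + 1)),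
      ∀ u ∈ closedBall d ε, x + t • u ∉ C := by
    intro k
    obtain ⟨d, hd, hfail⟩ := hcon (k + 1) (by positivity) (1 / (k + 1)) (by positivity)
    simp only [UniformlyTangentAtInfty, not_forall, not_exists, not_and] at hfail
    obtain ⟨x, hx, hRx, t, ht, hnot⟩ := hfail
    exact ⟨d, hd, x, hx, hRx, t, ht, hnot⟩
  choose d hdD x hxC hpx t ht hnot using hbad
  have ht₀ : ∀ k, 0 < t k := fun k => (ht k).1.lt_of_ne fun h =>
    hnot k (d k) (mem_closedBall_self hε.le) (by simpa [← h] using hxC k)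
  have hx : Tendsto (fun k => ‖p (x k)‖) atTop atTop :=
    tendsto_atTop_mono (fun k => by linarith [hpx k]) tendsto_natCast_atTop_atTop
  have ht : Tendsto t atTop (𝓝 0) :=
    squeeze_zero (fun k => (ht₀ k).le) (fun k => (ht k).2) tendsto_one_div_add_atTop_nhds_zero_nat
  obtain ⟨d₀, hd₀, φ, hφ, hdφ⟩ := hD.tendsto_subseq hdD
  obtain ⟨k, u, hu, huC⟩ := (eventually_exists_mem_add_smul_of_mem_tangentConeAtInfty (hDC hd₀)
    hdφ (fun k => hxC (φ k)) (hx.comp hφ.tendsto_atTop) (fun k => ht₀ (φ k))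
    (ht.comp hφ.tendsto_atTop) hε).exists
  exact hnot (φ k) u hu huC

end Tangency

variable {F : Type*} [SeminormedAddCommGroup F]

lemma UniformlyTangentAtInfty.sum {p : E → F} (hp : LipschitzWith 1 p) {C : Set E}
    {ε R lam M : ℝ} (hε : 0 ≤ ε) {ι : Type*} (s : Finset ι) {w : ι → ℝ} {z : ι → E}
    (hw₀ : ∀ i ∈ s, 0 ≤ w i) (hw₁ : ∑ i ∈ s, w i ≤ 1) (hzM : ∀ i ∈ s, ‖z i‖ ≤ M)
    (hz : ∀ i ∈ s, UniformlyTangentAtInfty p C ε R lam (z i)) :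
    UniformlyTangentAtInfty p C (ε * ∑ i ∈ s, w i) (R + lam * (M + ε) * ∑ i ∈ s, w i) lam
      (∑ i ∈ s, w i • z i) := by
  induction s using Finset.cons_induction with
  | empty => exact fun x hx _ t _ => ⟨0, by simp, by simpa using hx⟩
  | cons a s ha ih =>
    intro x hx hRx t ht
    simp only [Finset.forall_mem_cons, Finset.sum_cons] at hw₀ hw₁ hzM hz hRx ⊢
    have hS : 0 ≤ ∑ i ∈ s, w i := Finset.sum_nonneg hw₀.2
    have hM : 0 ≤ M := (norm_nonneg _).trans hzM.1
    have hlam : 0 ≤ lam := ht.1.trans ht.2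
    have hstep : t * w a ∈ Icc 0 lam :=
      ⟨mul_nonneg ht.1 hw₀.1, by nlinarith [ht.1, ht.2, hw₀.1]⟩
    obtain ⟨ua, hua, hxa⟩ := hz.1 x hx (by nlinarith [mul_nonneg hlam (add_nonneg hM hε)]) _ hstep
    have hua_norm : ‖ua‖ ≤ M + ε := by
      linarith [norm_le_norm_add_norm_sub' ua (z a), mem_closedBall_iff_norm.1 hua, hzM.1]
    have hpx' : ‖p x‖ - ‖(t * w a) • ua‖ ≤ ‖p (x + (t * w a) • ua)‖ := by
      have := hp.norm_sub_le (x + (t * w a) • ua) x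
      rw [NNReal.coe_one, one_mul, add_sub_cancel_left] at this
      linarith [norm_le_norm_add_norm_sub (p (x + (t * w a) • ua)) (p x)]
    have hstep_norm : ‖(t * w a) • ua‖ ≤ lam * w a * (M + ε) := by
      rw [norm_smul, Real.norm_of_nonneg hstep.1]
      exact mul_le_mul (mul_le_mul_of_nonneg_right ht.2 hw₀.1) hua_norm (norm_nonneg _)
        (mul_nonneg hlam hw₀.1)
    obtain ⟨u', hu', hu'C⟩ := ih hw₀.2 (by linarith) hzM.2 hz.2 _ hxa (by linarith) t ht
    refine ⟨w a • ua + u', ?_, ?_⟩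
    · rw [mem_closedBall_iff_norm] at hua hu' ⊢
      calc ‖w a • ua + u' - (w a • z a + ∑ i ∈ s, w i • z i)‖
          = ‖w a • (ua - z a) + (u' - ∑ i ∈ s, w i • z i)‖ := by
            rw [smul_sub]; abel_nf
        _ ≤ w a * ε + ε * ∑ i ∈ s, w i := by
            refine (norm_add_le _ _).trans (add_le_add ?_ hu')
            rw [norm_smul, Real.norm_of_nonneg hw₀.1]
            exact mul_le_mul_of_nonneg_left hua hw₀.1
        _ = ε * (w a + ∑ i ∈ s, w i) := by ring
    · simpa [smul_add, smul_smul, add_assoc] using hu'C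

theorem stmt0 (n : ℕ) (C : Set (En n)) (I : Finset (Fin n))
    (D : Set (En n)) (hDcpt : IsCompact D)
    (hDsub : D ⊆ tangentConeAtInfty (proj I) C) :
    ∀ ε : ℝ, 0 < ε → ∃ R : ℝ, 0 < R ∧ ∃ lam : ℝ, 0 < lam ∧
      ∀ v ∈ convexHull ℝ D, ∀ x ∈ C, R < ‖proj I x‖ → ∀ t ∈ Icc (0:ℝ) lam,
        (C ∩ (fun u => x + t • u) '' closedBall v ε).Nonempty := by
  intro ε hε
  obtain ⟨R, hR, lam, hlam, hD⟩ := hDcpt.exists_uniformlyTangentAtInfty hDsub hε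
  obtain ⟨M, hM, hDM⟩ := hDcpt.isBounded.exists_pos_norm_le
  refine ⟨R + lam * (M + ε), by positivity, lam, hlam, ?_⟩
  intro v hv x hx hRx t ht
  obtain ⟨ι, _, w, z, hw₀, hw₁, hzD, rfl⟩ := mem_convexHull_iff_exists_fintype.1 hv
  have hvC := UniformlyTangentAtInfty.sum (lipschitzWith_one_proj I) hε.le Finset.univ
    (fun i _ => hw₀ i) hw₁.le (fun i _ => hDM _ (hzD i)) (fun i _ => hD _ (hzD i))
  rw [hw₁, mul_one, mul_one] at hvC
  obtain ⟨u, hu, huC⟩ := hvC x hx hRx t ht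
  exact ⟨x + t • u, huC, u, hu, rfl⟩
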